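/- For every N ∈ ℕ there exists B₀ ≥ 1 such that for all B ≥ B₀ the following holds: every finitely supported probability measure ξ* on [0,1] that maximizes the standardized maximin D-criterion Φ_B(ξ) = inf_{β∈[1,B]} e²β² ∫₀¹ x² e^{−2βx} dξ(x) over all finitely supported probability measures ξ on [0,1] is supported at more than N points. -/

import Mathlib

open scoped BigOperators

/-- An approximate design on `ℝ`: a finitely supported probability measure,
given by its support points and positive weights summing to one. -/
structure Design where
  support : Finset ℝ
  w : ℝ → ℝ
  w_pos : ∀ x ∈ support, 0 < w x
  w_zero : ∀ x ∉ support, w x = 0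
  sum_one : ∑ x ∈ support, w x = 1

/-- Information `M(ξ,β) = ∫₀¹ x² e^{−2βx} dξ(x)` of a design in the one-parameter
exponential model `η(x,β) = e^{−βx}`. -/
noncomputable def expInfo (ξ : Design) (β : ℝ) : ℝ :=
  ∑ x ∈ ξ.support, ξ.w x * (x ^ 2 * Real.exp (-2 * β * x))

/-- Standardized maximin criterion `Φ_B(ξ) = inf_{β∈[1,B]} e²β² M(ξ,β)` for the
one-parameter exponential model. -/
noncomputable def PhiMaximin (B : ℝ) (ξ : Design) : ℝ :=
  ⨅ β : Set.Icc (1 : ℝ) B, Real.exp 2 * (β : ℝ) ^ 2 * expInfo ξ (β : ℝ)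

/-!
Write `t = βx`: a design point `x` contributes `pointEff (βx)` to the standardized information
at `β`, and `pointEff t = e² t² e^{-2t}` is at most `4e²a²` outside `(a, 1/a)`. If `ξ` has at
most `N` points, some of the `N + 1` parameters `β = 1, m, …, m^N` with `m = a⁻²` lies in
none of the windows `(a, 1/a) / x` of its points, since a window of width ratio `m` contains
at most one of them; hence `Φ_B(ξ) ≤ 4e²/m` as soon as `m^N ≤ B`. On the other hand the uniform
design on `1, e⁻¹, …, e^{-⌊log B⌋}` puts a point within a factor `e` of `1/β` for every `β`,
so `Φ_B ≥ e^{2-2e}/(log B + 1)`. Taking `m` of order `log B` contradicts optimality, because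
`(log B)^N = o(B)`.
-/

open Real Set Filter Asymptotics

noncomputable section

/-- The standardized information `e²β² x² e^{-2βx}` of the one-point design at `x`,
written as a function of `t = βx`. -/
def pointEff (t : ℝ) : ℝ := exp 2 * t ^ 2 * exp (-2 * t)

lemma pointEff_nonneg (t : ℝ) : 0 ≤ pointEff t := by
  unfold pointEff; positivity

lemma pointEff_le_exp_two_mul_sq {t : ℝ} (ht : 0 ≤ t) : pointEff t ≤ exp 2 * t ^ 2 := by
  have : exp (-2 * t) ≤ 1 := exp_le_one_iff.2 (by linarith)
  unfold pointEff
  exact mul_le_of_le_one_right (by positivity) this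

lemma sq_mul_exp_neg_le_two {t : ℝ} (ht : 0 ≤ t) : t ^ 2 * exp (-t) ≤ 2 := by
  have h := pow_div_factorial_le_exp t ht 2
  rw [exp_neg, ← div_eq_mul_inv, div_le_iff₀ (exp_pos t)]
  norm_num at h
  linarith

lemma pointEff_mul_sq_le {t : ℝ} (ht : 0 ≤ t) : pointEff t * t ^ 2 ≤ 4 * exp 2 := by
  have h := sq_mul_exp_neg_le_two ht
  have hsq : (t ^ 2 * exp (-t)) ^ 2 ≤ 2 ^ 2 := pow_le_pow_left₀ (by positivity) h 2
  calc pointEff t * t ^ 2 = exp 2 * (t ^ 2 * exp (-t)) ^ 2 := by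
        rw [pointEff, mul_pow, ← exp_nat_mul]; ring_nf
    _ ≤ 4 * exp 2 := by nlinarith [exp_pos 2]

lemma pointEff_le_of_notMem_Ioo {a t : ℝ} (ha : 0 < a) (ht : 0 ≤ t) (h : t ∉ Ioo a a⁻¹) :
    pointEff t ≤ 4 * exp 2 * a ^ 2 := by
  rcases le_or_gt t a with hta | hat
  · calc pointEff t ≤ exp 2 * t ^ 2 := pointEff_le_exp_two_mul_sq ht
      _ ≤ exp 2 * a ^ 2 := by gcongr
      _ ≤ 4 * exp 2 * a ^ 2 := by nlinarith [exp_pos 2]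
  · have hat : 1 ≤ a * t := by
      rw [← inv_mul_cancel₀ ha.ne', mul_comm a]
      exact mul_le_mul_of_nonneg_right (not_lt.1 fun h' => h ⟨hat, h'⟩) ha.le
    have hsq : 1 ≤ a ^ 2 * t ^ 2 := by nlinarith
    calc pointEff t ≤ pointEff t * (a ^ 2 * t ^ 2) := le_mul_of_one_le_right (pointEff_nonneg t) hsq
      _ = a ^ 2 * (pointEff t * t ^ 2) := by ring
      _ ≤ a ^ 2 * (4 * exp 2) := mul_le_mul_of_nonneg_left (pointEff_mul_sq_le ht) (sq_nonneg a)
      _ = 4 * exp 2 * a ^ 2 := by ring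

lemma exp_two_sub_two_mul_exp_one_le_pointEff {t : ℝ} (ht : t ∈ Icc 1 (exp 1)) :
    exp (2 - 2 * exp 1) ≤ pointEff t := by
  have hexp : exp (-2 * exp 1) ≤ exp (-2 * t) := exp_le_exp.2 (by linarith [ht.2])
  have hsq : 1 ≤ t ^ 2 := one_le_pow₀ ht.1
  calc exp (2 - 2 * exp 1) = exp 2 * 1 * exp (-2 * exp 1) := by
        rw [mul_one, ← exp_add]; ring_nf
    _ ≤ pointEff t := by unfold pointEff; gcongr

namespace Design

lemma w_nonneg (ξ : Design) (x : ℝ) : 0 ≤ ξ.w x := by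
  by_cases hx : x ∈ ξ.support
  · exact (ξ.w_pos x hx).le
  · exact (ξ.w_zero x hx).ge

lemma sum_w_mul_le {ξ : Design} {f : ℝ → ℝ} {c : ℝ} (h : ∀ x ∈ ξ.support, f x ≤ c) :
    ∑ x ∈ ξ.support, ξ.w x * f x ≤ c :=
  calc ∑ x ∈ ξ.support, ξ.w x * f x ≤ ∑ x ∈ ξ.support, ξ.w x * c :=
        Finset.sum_le_sum fun x hx => mul_le_mul_of_nonneg_left (h x hx) (ξ.w_nonneg x)
    _ = c := by rw [← Finset.sum_mul, ξ.sum_one, one_mul]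

end Design

lemma exp_two_mul_sq_mul_expInfo (ξ : Design) (β : ℝ) :
    exp 2 * β ^ 2 * expInfo ξ β = ∑ x ∈ ξ.support, ξ.w x * pointEff (β * x) := by
  rw [expInfo, Finset.mul_sum]
  refine Finset.sum_congr rfl fun x _ => ?_
  rw [pointEff, show -2 * (β * x) = -2 * β * x by ring]
  ring

lemma PhiMaximin_le {B β : ℝ} (ξ : Design) (hβ : β ∈ Icc 1 B) :
    PhiMaximin B ξ ≤ ∑ x ∈ ξ.support, ξ.w x * pointEff (β * x) := by
  have hbdd : BddBelow (range fun β : Icc (1 : ℝ) B => exp 2 * (β : ℝ) ^ 2 * expInfo ξ β) := by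
    refine ⟨0, ?_⟩
    rintro _ ⟨β, rfl⟩
    dsimp only
    rw [exp_two_mul_sq_mul_expInfo]
    exact Finset.sum_nonneg fun x _ => mul_nonneg (ξ.w_nonneg x) (pointEff_nonneg _)
  rw [← exp_two_mul_sq_mul_expInfo]
  exact ciInf_le hbdd (⟨β, hβ⟩ : Icc (1 : ℝ) B)

lemma le_PhiMaximin {B c : ℝ} (hB : 1 ≤ B) (ξ : Design)
    (h : ∀ β ∈ Icc 1 B, c ≤ ∑ x ∈ ξ.support, ξ.w x * pointEff (β * x)) :
    c ≤ PhiMaximin B ξ := by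
  have : Nonempty (Icc (1 : ℝ) B) := ⟨⟨1, le_rfl, hB⟩⟩
  refine le_ciInf fun β => ?_
  rw [exp_two_mul_sq_mul_expInfo]
  exact h β β.2

lemma eq_of_pow_mul_mem_Ioo {a b R x : ℝ} (ha : 0 ≤ a) (hR : 1 ≤ R) (hb : b ≤ R * a)
    {k l : ℕ} (hk : R ^ k * x ∈ Ioo a b) (hl : R ^ l * x ∈ Ioo a b) : k = l := by
  have no_lt : ∀ {k l : ℕ}, R ^ k * x ∈ Ioo a b → R ^ l * x ∈ Ioo a b → ¬ k < l := by
    intro k l hk hl hkl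
    have hx : 0 < x := pos_of_mul_pos_right (ha.trans_lt hk.1) (by positivity)
    have : b < R ^ l * x :=
      calc b ≤ R * a := hb
        _ < R * (R ^ k * x) := mul_lt_mul_of_pos_left hk.1 (by linarith)
        _ = R ^ (k + 1) * x := by ring
        _ ≤ R ^ l * x := by exact mul_le_mul_of_nonneg_right (pow_le_pow_right₀ hR hkl) hx.le
    exact this.not_gt hl.2
  have := @no_lt k l hk hl
  have := @no_lt l k hl hk
  omega

lemma exists_pow_mul_notMem_Ioo (S : Finset ℝ) {N : ℕ} (hS : S.card ≤ N) {a b R : ℝ}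
    (ha : 0 ≤ a) (hR : 1 ≤ R) (hb : b ≤ R * a) :
    ∃ k ≤ N, ∀ x ∈ S, R ^ k * x ∉ Ioo a b := by
  classical
  set hits := S.biUnion fun x => (Finset.range (N + 1)).filter fun k => R ^ k * x ∈ Ioo a b
  have hcard : hits.card < (Finset.range (N + 1)).card :=
    calc hits.card ≤ ∑ x ∈ S, 1 := Finset.card_biUnion_le.trans <| Finset.sum_le_sum fun x _ =>
          Finset.card_le_one.2 fun k hk l hl =>
            eq_of_pow_mul_mem_Ioo ha hR hb (Finset.mem_filter.1 hk).2 (Finset.mem_filter.1 hl).2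
      _ < N + 1 := by simpa using Nat.lt_succ_of_le hS
      _ = _ := (Finset.card_range _).symm
  obtain ⟨k, hk, hk_hits⟩ := Finset.exists_mem_notMem_of_card_lt_card hcard
  refine ⟨k, Nat.lt_succ_iff.1 (Finset.mem_range.1 hk), fun x hx hmem => hk_hits ?_⟩
  exact Finset.mem_biUnion.2 ⟨x, hx, Finset.mem_filter.2 ⟨hk, hmem⟩⟩

lemma PhiMaximin_le_of_card_le {B m : ℝ} {N : ℕ} (hm : 1 ≤ m) (hmB : m ^ N ≤ B) (ξ : Design)
    (hξ : ∀ x ∈ ξ.support, 0 ≤ x) (hcard : ξ.support.card ≤ N) :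
    PhiMaximin B ξ ≤ 4 * exp 2 / m := by
  set a := (√m)⁻¹
  have ha : 0 < a := inv_pos.2 (sqrt_pos.2 (by linarith))
  have hwindow : a⁻¹ ≤ m * a := by rw [inv_inv, ← div_eq_mul_inv, div_sqrt]
  have ha_sq : a ^ 2 = m⁻¹ := by rw [inv_pow, sq_sqrt (by linarith)]
  obtain ⟨k, hkN, hk⟩ := exists_pow_mul_notMem_Ioo ξ.support hcard ha.le hm hwindow
  have hβ : m ^ k ∈ Icc 1 B := ⟨one_le_pow₀ hm, (pow_le_pow_right₀ hm hkN).trans hmB⟩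
  calc PhiMaximin B ξ ≤ ∑ x ∈ ξ.support, ξ.w x * pointEff (m ^ k * x) := PhiMaximin_le ξ hβ
    _ ≤ 4 * exp 2 * a ^ 2 := Design.sum_w_mul_le fun x hx =>
        pointEff_le_of_notMem_Ioo ha (mul_nonneg (by positivity) (hξ x hx)) (hk x hx)
    _ = 4 * exp 2 / m := by rw [ha_sq, div_eq_mul_inv]

def uniformDesign (S : Finset ℝ) (hS : S.Nonempty) : Design where
  support := S
  w x := if x ∈ S then (S.card : ℝ)⁻¹ else 0
  w_pos x hx := by simpa [hx] using hS.card_pos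
  w_zero x hx := if_neg hx
  sum_one := by
    rw [Finset.sum_congr rfl fun x hx => if_pos hx, Finset.sum_const, nsmul_eq_mul,
      mul_inv_cancel₀ (Nat.cast_ne_zero.2 hS.card_pos.ne')]

lemma uniformDesign_w_of_mem {S : Finset ℝ} (hS : S.Nonempty) {x : ℝ} (hx : x ∈ S) :
    (uniformDesign S hS).w x = (S.card : ℝ)⁻¹ :=
  if_pos hx

def geomDesign (n : ℕ) : Design :=
  uniformDesign ((Finset.range (n + 1)).image fun j : ℕ => exp (-j)) (by simp)

lemma geomDesign_support_subset (n : ℕ) : ↑(geomDesign n).support ⊆ Icc (0 : ℝ) 1 := by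
  intro x hx
  obtain ⟨j, -, rfl⟩ := Finset.mem_image.1 hx
  exact ⟨(exp_pos _).le, exp_le_one_iff.2 (neg_nonpos.2 j.cast_nonneg)⟩

lemma mul_exp_neg_floor_log_mem_Icc {β : ℝ} (hβ : 1 ≤ β) :
    β * exp (-⌊log β⌋₊) ∈ Icc 1 (exp 1) := by
  have hlog : 0 ≤ log β := log_nonneg hβ
  have h_floor := Nat.floor_le hlog
  have h_lt := Nat.lt_floor_add_one (log β)
  rw [exp_neg, ← div_eq_mul_inv, ← exp_log (by linarith : 0 < β), ← exp_sub, log_exp]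
  exact ⟨one_le_exp (by linarith), exp_le_exp.2 (by linarith)⟩

lemma le_PhiMaximin_geomDesign {B : ℝ} (hB : 1 ≤ B) :
    exp (2 - 2 * exp 1) / (log B + 1) ≤ PhiMaximin B (geomDesign ⌊log B⌋₊) := by
  set S := (Finset.range (⌊log B⌋₊ + 1)).image fun j : ℕ => exp (-j)
  have hS : (S.card : ℝ) ≤ log B + 1 := by
    have h_floor := Nat.floor_le (log_nonneg hB)
    have h_card : S.card ≤ ⌊log B⌋₊ + 1 := Finset.card_image_le.trans (Finset.card_range _).le
    have : (S.card : ℝ) ≤ ⌊log B⌋₊ + 1 := by exact_mod_cast h_card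
    linarith
  refine le_PhiMaximin hB _ fun β hβ => ?_
  have hx : exp (-⌊log β⌋₊) ∈ S := Finset.mem_image.2 ⟨_, Finset.mem_range.2 <|
    Nat.lt_succ_of_le (Nat.floor_le_floor (log_le_log (by linarith [hβ.1]) hβ.2)), rfl⟩
  calc exp (2 - 2 * exp 1) / (log B + 1) ≤ (S.card : ℝ)⁻¹ * exp (2 - 2 * exp 1) := by
        rw [div_eq_inv_mul]; gcongr
    _ ≤ (geomDesign ⌊log B⌋₊).w (exp (-⌊log β⌋₊)) * pointEff (β * exp (-⌊log β⌋₊)) := by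
        rw [geomDesign, uniformDesign_w_of_mem _ hx]
        gcongr
        exact exp_two_sub_two_mul_exp_one_le_pointEff (mul_exp_neg_floor_log_mem_Icc hβ.1)
    _ ≤ ∑ x ∈ (geomDesign ⌊log B⌋₊).support, (geomDesign ⌊log B⌋₊).w x * pointEff (β * x) :=
        Finset.single_le_sum (fun x _ => mul_nonneg (Design.w_nonneg _ x) (pointEff_nonneg _)) hx

lemma eventually_mul_log_add_one_pow_le (K : ℝ) (N : ℕ) :
    ∀ᶠ B in atTop, (K * (log B + 1)) ^ N ≤ B := by
  have hlin : (fun B => K * (log B + 1)) =O[atTop] log :=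
    ((isBigO_refl log atTop).add isLittleO_const_log_atTop.isBigO).const_mul_left K
  have hpow := (hlin.pow N).trans_isLittleO isLittleO_pow_log_id_atTop
  filter_upwards [hpow.bound one_pos, eventually_ge_atTop 0] with B hB hB0
  rw [one_mul, id, norm_of_nonneg hB0] at hB
  exact (le_abs_self _).trans (by simpa using hB)

end

/-- For the one-parameter exponential model on `[0,1]`: for every `N` there is `B₀ ≥ 1`
such that for all `B ≥ B₀`, every standardized maximin `D`-optimal design for the
parameter space `[1,B]` is supported at more than `N` points. -/
theorem exp_model_maximin_support_unbounded (N : ℕ) :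
    ∃ B₀ : ℝ, 1 ≤ B₀ ∧
      ∀ B : ℝ, B₀ ≤ B →
        ∀ ξstar : Design, ↑ξstar.support ⊆ Set.Icc (0 : ℝ) 1 →
          (∀ ξ : Design, ↑ξ.support ⊆ Set.Icc (0 : ℝ) 1 →
            PhiMaximin B ξ ≤ PhiMaximin B ξstar) →
          N < ξstar.support.card := by
  set c := exp (2 - 2 * exp 1)
  have hc : 0 < c := exp_pos _
  have hc1 : c ≤ 1 := exp_le_one_iff.2 (by linarith [add_one_le_exp 1])
  obtain ⟨B₁, hB₁⟩ := eventually_atTop.1 (eventually_mul_log_add_one_pow_le (8 * exp 2 / c) N)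
  refine ⟨max B₁ 1, le_max_right _ _, fun B hB ξstar hsupp hopt => ?_⟩
  by_contra! hcard
  have hB1 : 1 ≤ B := le_of_max_le_right hB
  have hL : 1 ≤ log B + 1 := by linarith [log_nonneg hB1]
  have hm : 1 ≤ 8 * exp 2 / c * (log B + 1) := one_le_mul_of_one_le_of_one_le
    ((one_le_div hc).2 (by linarith [add_one_le_exp 2])) hL
  have upper := PhiMaximin_le_of_card_le hm (hB₁ B (le_of_max_le_left hB)) ξstar
    (fun x hx => (hsupp hx).1) hcard
  have lower := (le_PhiMaximin_geomDesign hB1).trans (hopt _ (geomDesign_support_subset _))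
  have : 4 * exp 2 / (8 * exp 2 / c * (log B + 1)) < c / (log B + 1) := by
    rw [div_lt_div_iff₀ (by positivity) (by positivity)]
    field_simp
    nlinarith [exp_pos 2]
  linarith
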